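/- If m ≥ 1 and n ≥ 2 are integers with n ≡ 2 (mod 3), then the bondage number of K_m ⊠ P_n satisfies b(K_m ⊠ P_n) ≤ m. -/

import Mathlib

open SimpleGraph Finset

/-- `D` is a dominating set of `G`: every vertex is in `D` or adjacent to a vertex of `D`. -/
def SimpleGraph.IsDominatingSet {V : Type*} (G : SimpleGraph V) (D : Set V) : Prop :=
  ∀ v : V, v ∈ D ∨ ∃ u ∈ D, G.Adj u v

/-- The domination number of a finite graph. -/
noncomputable def SimpleGraph.dominationNumber {V : Type*} [Fintype V]
    (G : SimpleGraph V) : ℕ :=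
  sInf {k | ∃ D : Finset V, D.card = k ∧ G.IsDominatingSet ↑D}

/-- The bondage number of a finite graph: the least size of a set of edges whose removal
increases the domination number. -/
noncomputable def SimpleGraph.bondageNumber {V : Type*} [Fintype V]
    (G : SimpleGraph V) : ℕ :=
  sInf {k | ∃ Z : Finset (Sym2 V), Z.card = k ∧ (↑Z : Set (Sym2 V)) ⊆ G.edgeSet ∧
    G.dominationNumber < (G.deleteEdges ↑Z).dominationNumber}

/-- The strong product of two simple graphs. -/
def SimpleGraph.strongProd {V W : Type*} (G : SimpleGraph V) (H : SimpleGraph W) :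
    SimpleGraph (V × W) :=
  SimpleGraph.fromRel (fun a b =>
    (a.1 = b.1 ∧ H.Adj a.2 b.2) ∨ (G.Adj a.1 b.1 ∧ a.2 = b.2) ∨
      (G.Adj a.1 b.1 ∧ H.Adj a.2 b.2))

infixl:70 " ⊠ " => SimpleGraph.strongProd

/-!
Deleting the `m` rungs `(v, 0)(v, 1)` of `K_m ⊠ P_n` raises the domination number from at most
`⌈n / 3⌉` to at least `⌈(n + 2) / 3⌉`, and these differ when `n ≡ 2 (mod 3)`. A vertex dominates
only its own layer and the two neighbouring ones. Without the rungs, a dominating set either has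
two vertices in layers `0, 1`, or a single one, `d`; then `d` lies in layer `0` (otherwise
`(d.1, 0)` is undominated) and cannot dominate any vertex of `{d.1} × {1, …, n - 1}`, so these
`n - 1` layers are covered by vertices outside the first two layers.
-/

theorem Finset.card_Icc_le_three_mul_card {α : Type*} (B : Finset α) (p : α → ℕ) {lo hi : ℕ}
    (h : ∀ c ∈ Icc lo hi, ∃ b ∈ B, p b ≤ c + 1 ∧ c ≤ p b + 1) : #(Icc lo hi) ≤ 3 * #B := by
  classical
  calc #(Icc lo hi) ≤ #(B.biUnion fun b => Icc (p b - 1) (p b + 1)) := by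
        refine card_le_card fun c hc => ?_
        obtain ⟨b, hb, h1, h2⟩ := h c hc
        exact mem_biUnion.2 ⟨b, hb, mem_Icc.2 ⟨by omega, h2⟩⟩
    _ ≤ ∑ b ∈ B, #(Icc (p b - 1) (p b + 1)) := card_biUnion_le
    _ ≤ ∑ _b ∈ B, 3 := sum_le_sum fun b _ => by rw [Nat.card_Icc]; omega
    _ = 3 * #B := by rw [sum_const, smul_eq_mul, mul_comm]

namespace SimpleGraph

variable {V W : Type*}

theorem strongProd_adj {G : SimpleGraph V} {H : SimpleGraph W} {a b : V × W} :
    (G ⊠ H).Adj a b ↔ a ≠ b ∧ (a.1 = b.1 ∨ G.Adj a.1 b.1) ∧ (a.2 = b.2 ∨ H.Adj a.2 b.2) := by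
  rw [strongProd, fromRel_adj]
  constructor
  · rintro ⟨hab, h | h⟩
    · aesop
    · refine ⟨hab, ?_⟩
      rcases h with ⟨h1, h2⟩ | ⟨h1, h2⟩ | ⟨h1, h2⟩ <;> simp_all [eq_comm, G.adj_comm, H.adj_comm]
  · rintro ⟨hab, h1 | h1, h2 | h2⟩
    · exact absurd (Prod.ext h1 h2) hab
    all_goals simp_all

theorem strongProd_pathGraph_adj {G : SimpleGraph V} {n : ℕ} {a b : V × Fin n}
    (h : (G ⊠ pathGraph n).Adj a b) : (a.2 : ℕ) ≤ b.2 + 1 ∧ (b.2 : ℕ) ≤ a.2 + 1 := by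
  rcases (strongProd_adj.1 h).2.2 with h2 | h2
  · simp [h2]
  · rw [pathGraph_adj] at h2
    omega

section Domination

variable [Fintype V] {G : SimpleGraph V}

theorem IsDominatingSet.dominationNumber_le {D : Finset V} (hD : G.IsDominatingSet D) :
    G.dominationNumber ≤ #D :=
  Nat.sInf_le ⟨D, rfl, hD⟩

theorem exists_isDominatingSet_card_eq_dominationNumber :
    ∃ D : Finset V, #D = G.dominationNumber ∧ G.IsDominatingSet D :=
  Nat.sInf_mem (s := {k | ∃ D : Finset V, #D = k ∧ G.IsDominatingSet D})
    ⟨#(univ : Finset V), univ, rfl, fun v => Or.inl (mem_univ v)⟩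

theorem le_dominationNumber {k : ℕ} (h : ∀ D : Finset V, G.IsDominatingSet D → k ≤ #D) :
    k ≤ G.dominationNumber := by
  obtain ⟨D, hcard, hD⟩ := G.exists_isDominatingSet_card_eq_dominationNumber
  exact hcard ▸ h D hD

theorem bondageNumber_le_card {Z : Finset (Sym2 V)} (hZ : (Z : Set (Sym2 V)) ⊆ G.edgeSet)
    (h : G.dominationNumber < (G.deleteEdges Z).dominationNumber) : G.bondageNumber ≤ #Z :=
  Nat.sInf_le ⟨Z, rfl, hZ, h⟩

end Domination

theorem IsDominatingSet.top_strongProd {H : SimpleGraph W} {D : Set W} (hD : H.IsDominatingSet D)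
    (v : V) : ((⊤ : SimpleGraph V) ⊠ H).IsDominatingSet (Prod.mk v '' D) := by
  rintro ⟨v', w⟩
  rcases hD w with hw | ⟨u, hu, huw⟩
  · by_cases hv : v = v'
    · exact Or.inl ⟨w, hw, hv ▸ rfl⟩
    · exact Or.inr ⟨(v, w), ⟨w, hw, rfl⟩, strongProd_adj.2 ⟨by simpa, Or.inr hv, Or.inl rfl⟩⟩
  · refine Or.inr ⟨(v, u), ⟨u, hu, rfl⟩, strongProd_adj.2 ⟨by simp [huw.ne], ?_, Or.inr huw⟩⟩
    exact eq_or_ne v v'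

theorem dominationNumber_top_strongProd_le [Fintype V] [Nonempty V] [Fintype W]
    (H : SimpleGraph W) : ((⊤ : SimpleGraph V) ⊠ H).dominationNumber ≤ H.dominationNumber := by
  obtain ⟨D, hcard, hD⟩ := H.exists_isDominatingSet_card_eq_dominationNumber
  obtain ⟨v⟩ := ‹Nonempty V›
  calc _ ≤ #(D.map ⟨Prod.mk v, Prod.mk_right_injective v⟩) := by
        apply IsDominatingSet.dominationNumber_le
        rw [coe_map]
        exact hD.top_strongProd v
    _ = H.dominationNumber := by rw [card_map, hcard]

theorem pathGraph_dominationNumber_le (n : ℕ) : (pathGraph n).dominationNumber ≤ (n + 2) / 3 := by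
  let center : Fin ((n + 2) / 3) → Fin n := fun k => ⟨min (3 * k + 1) (n - 1), by omega⟩
  calc _ ≤ #(univ.image center) := by
        apply IsDominatingSet.dominationNumber_le
        intro c
        have hk : (c : ℕ) / 3 < (n + 2) / 3 := by omega
        by_cases hc : center ⟨_, hk⟩ = c
        · exact Or.inl (hc ▸ mem_coe.2 (mem_image_of_mem _ (mem_univ _)))
        · refine Or.inr ⟨_, mem_coe.2 (mem_image_of_mem _ (mem_univ ⟨_, hk⟩)), ?_⟩
          rw [pathGraph_adj]
          rw [Fin.ext_iff] at hc
          simp only [center] at hc ⊢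
          omega
    _ ≤ (n + 2) / 3 := card_image_le.trans (by simp)

section Rungs

variable (V) [Fintype V]

def rungEdges (w w' : W) : Finset (Sym2 (V × W)) :=
  univ.map ⟨fun v => s((v, w), (v, w')), fun v v' h => by
    rcases Sym2.eq_iff.1 h with ⟨h1, -⟩ | ⟨h1, -⟩ <;> exact (Prod.ext_iff.1 h1).1⟩

variable {V}

theorem card_rungEdges (w w' : W) : #(rungEdges V w w') = Fintype.card V := by
  simp [rungEdges]

theorem rungEdges_subset_edgeSet {G : SimpleGraph V} {H : SimpleGraph W} {w w' : W}
    (h : H.Adj w w') : (rungEdges V w w' : Set (Sym2 (V × W))) ⊆ (G ⊠ H).edgeSet := by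
  intro e he
  obtain ⟨v, -, rfl⟩ := mem_map.1 he
  exact strongProd_adj.2 ⟨by simp [h.ne], Or.inl rfl, Or.inr h⟩

theorem not_adj_deleteEdges_rungEdges (K : SimpleGraph (V × W)) (v : V) (w w' : W) :
    ¬ (K.deleteEdges (rungEdges V w w')).Adj (v, w) (v, w') := by
  rw [deleteEdges_adj, not_and, not_not]
  exact fun _ => mem_map_of_mem _ (mem_univ v)

end Rungs

theorem IsDominatingSet.exists_near {G : SimpleGraph V} {N : ℕ} {K : SimpleGraph (V × Fin N)}
    {D : Set (V × Fin N)} (hD : K.IsDominatingSet D) (hK : K ≤ G ⊠ pathGraph N)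
    (v : V × Fin N) :
    ∃ u ∈ D, (u = v ∨ K.Adj u v) ∧ (u.2 : ℕ) ≤ v.2 + 1 ∧ (v.2 : ℕ) ≤ u.2 + 1 := by
  rcases hD v with hv | ⟨u, hu, huv⟩
  · exact ⟨v, hv, Or.inl rfl, by omega, by omega⟩
  · exact ⟨u, hu, Or.inr huv, strongProd_pathGraph_adj (hK huv)⟩

section Ladder

variable [Fintype V] {G : SimpleGraph V} {n : ℕ}

theorem val_eq_zero_of_forall_le_one_eq {D : Set (V × Fin (n + 2))}
    (hD : ((G ⊠ pathGraph (n + 2)).deleteEdges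
      (rungEdges V (0 : Fin (n + 2)) 1)).IsDominatingSet D)
    {d : V × Fin (n + 2)} (hlow : ∀ u ∈ D, (u.2 : ℕ) ≤ 1 → u = d) : (d.2 : ℕ) = 0 := by
  obtain ⟨u, hu, hud, hnear⟩ := hD.exists_near (deleteEdges_le _) (d.1, 0)
  obtain rfl := hlow u hu (by simpa using hnear.1)
  obtain ⟨x, y⟩ := u
  rcases hud with h | h
  · simp_all
  · by_contra hy
    have hy1 : y = 1 := Fin.ext (by simp only [Fin.val_zero, Fin.val_one] at hnear hy ⊢; omega)
    subst hy1
    exact not_adj_deleteEdges_rungEdges _ x _ _ h.symm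

theorem two_le_of_forall_le_one_eq {D : Set (V × Fin (n + 2))} {d : V × Fin (n + 2)}
    (hlow : ∀ u ∈ D, (u.2 : ℕ) ≤ 1 → u = d) (hd : (d.2 : ℕ) = 0) {c : Fin (n + 2)}
    (hc : 1 ≤ (c : ℕ)) {u : V × Fin (n + 2)} (hu : u ∈ D)
    (huc : u = (d.1, c) ∨
      ((G ⊠ pathGraph (n + 2)).deleteEdges (rungEdges V (0 : Fin (n + 2)) 1)).Adj u (d.1, c)) :
    2 ≤ (u.2 : ℕ) := by
  by_contra! hu2
  obtain rfl := hlow u hu (by omega)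
  obtain ⟨x, y⟩ := u
  obtain rfl : y = 0 := Fin.ext hd
  rcases huc with h | h
  · simp only [Prod.mk.injEq] at h
    simp [← h.2] at hc
  · have hnear := strongProd_pathGraph_adj (deleteEdges_le _ h)
    obtain rfl : c = 1 := Fin.ext (by simp at hnear ⊢; omega)
    exact not_adj_deleteEdges_rungEdges _ x _ _ h

theorem add_four_le_three_mul_card [Nonempty V] {D : Finset (V × Fin (n + 2))}
    (hD : ((G ⊠ pathGraph (n + 2)).deleteEdges
      (rungEdges V (0 : Fin (n + 2)) 1)).IsDominatingSet D) :
    n + 4 ≤ 3 * #D := by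
  set A := D.filter fun u => (u.2 : ℕ) ≤ 1
  set B := D.filter fun u => ¬ (u.2 : ℕ) ≤ 1
  have hAB : #A + #B = #D := card_filter_add_card_filter_not _
  obtain ⟨v⟩ := ‹Nonempty V›
  obtain ⟨d, hdA⟩ : A.Nonempty := by
    obtain ⟨u, hu, -, hnear⟩ := hD.exists_near (deleteEdges_le _) (v, 0)
    exact ⟨u, mem_filter.2 ⟨hu, by simpa using hnear.1⟩⟩
  rcases le_or_gt #A 1 with hA | hA
  · have hlow : ∀ u ∈ D, (u.2 : ℕ) ≤ 1 → u = d := fun u hu h =>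
      card_le_one.1 hA u (mem_filter.2 ⟨hu, h⟩) d hdA
    have hB := card_Icc_le_three_mul_card B (fun u => (u.2 : ℕ)) (lo := 1) (hi := n + 1)
      fun c hc => by
        rw [mem_Icc] at hc
        obtain ⟨u, hu, huc, hnear⟩ := hD.exists_near (deleteEdges_le _) (d.1, ⟨c, by omega⟩)
        have := two_le_of_forall_le_one_eq hlow (val_eq_zero_of_forall_le_one_eq hD hlow)
          (c := ⟨c, by omega⟩) hc.1 hu huc
        exact ⟨u, mem_filter.2 ⟨hu, by omega⟩, hnear⟩
    have hA1 : 0 < #A := card_pos.2 ⟨d, hdA⟩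
    rw [Nat.card_Icc] at hB
    omega
  · have hB := card_Icc_le_three_mul_card B (fun u => (u.2 : ℕ)) (lo := 3) (hi := n + 1)
      fun c hc => by
        rw [mem_Icc] at hc
        obtain ⟨u, hu, -, hnear⟩ := hD.exists_near (deleteEdges_le _) (v, ⟨c, by omega⟩)
        exact ⟨u, mem_filter.2 ⟨hu, by simp at hnear; omega⟩, hnear⟩
    rw [Nat.card_Icc] at hB
    omega

end Ladder

end SimpleGraph

theorem bondage_le_of_mod_three_eq_two_general (m n : ℕ) (hm : 1 ≤ m)
    (h3 : n % 3 = 2) :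
    ((⊤ : SimpleGraph (Fin m)) ⊠ pathGraph n).bondageNumber ≤ m := by
  have : Nonempty (Fin m) := ⟨⟨0, hm⟩⟩
  obtain ⟨k, rfl⟩ : ∃ k, n = k + 2 := ⟨n - 2, by omega⟩
  calc _ ≤ #(rungEdges (Fin m) (0 : Fin (k + 2)) 1) := by
        refine bondageNumber_le_card (rungEdges_subset_edgeSet (by simp [pathGraph_adj])) ?_
        calc _ ≤ (k + 4) / 3 :=
              (dominationNumber_top_strongProd_le _).trans (pathGraph_dominationNumber_le _)
          _ < (k + 6) / 3 := by omega
          _ ≤ _ := le_dominationNumber fun D hD => by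
              have := add_four_le_three_mul_card hD
              omega
    _ = m := by rw [card_rungEdges, Fintype.card_fin]

/-- **Lemma.** If `m ≥ 1` and `n ≡ 2 (mod 3)` (`n ≥ 2`), then `b(K_m ⊠ P_n) ≤ m`. -/
theorem bondage_le_of_mod_three_eq_two (m n : ℕ) (hm : 1 ≤ m) (hn : 2 ≤ n)
    (h3 : n % 3 = 2) :
    ((⊤ : SimpleGraph (Fin m)) ⊠ pathGraph n).bondageNumber ≤ m :=
  bondage_le_of_mod_three_eq_two_general m n hm h3
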